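/- Let ξ^{AB} be a bipartite state whose reduced state on A is almost pure in the sense that F(ξ^A, |ψ⟩⟨ψ|^A) ≥ 1 − ε for some pure state |ψ⟩ and ε ≥ 0. Then ξ^{AB} is almost a product state: F(ξ^{AB}, |ψ⟩⟨ψ|^A ⊗ ξ^B) ≥ 1 − 4ε. -/

import Mathlib

noncomputable section
open scoped BigOperators Kronecker ComplexOrder
open Matrix Filter

namespace QIT

attribute [local instance] Classical.propDecidable

/-- binary logarithm (the paper uses log base 2). -/
def log2 (x : ℝ) : ℝ := Real.logb 2 x

/-- binary entropy function. -/
def binEnt (x : ℝ) : ℝ := -(x * log2 x) - (1 - x) * log2 (1 - x)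

/-- A (density) state: positive semidefinite with unit trace. -/
def IsState {d : Type*} [Fintype d] (ρ : Matrix d d ℂ) : Prop :=
  ρ.PosSemidef ∧ ρ.trace = 1

/-- von Neumann entropy (base 2), via eigenvalues of a Hermitian matrix. -/
def entropy {d : Type*} [Fintype d] [DecidableEq d] (ρ : Matrix d d ℂ) : ℝ :=
  if h : ρ.IsHermitian then -∑ i, h.eigenvalues i * log2 (h.eigenvalues i) else 0

/-- The square root of a positive semidefinite matrix (Mathlib's former `Matrix.PosSemidef.sqrt`). -/
def _root_.Matrix.PosSemidef.sqrt {n : Type*} [Fintype n] [DecidableEq n] {A : Matrix n n ℂ}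
    (hA : A.PosSemidef) : Matrix n n ℂ :=
  hA.1.eigenvectorUnitary.1 * diagonal ((↑) ∘ (√·) ∘ hA.1.eigenvalues) *
    (star hA.1.eigenvectorUnitary : Matrix n n ℂ)

/-- Fidelity F(ρ,ξ) = Tr √(√ρ ξ √ρ). -/
def fidelity {d : Type*} [Fintype d] [DecidableEq d] (ρ ξ : Matrix d d ℂ) : ℝ :=
  if hρ : ρ.PosSemidef then
    if h : (hρ.sqrt * ξ * hρ.sqrt).PosSemidef then (Matrix.trace h.sqrt).re else 0
  else 0

/-- Rank-one projector |v⟩⟨v| associated with a vector. -/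
def vecState {d : Type*} (v : d → ℂ) : Matrix d d ℂ := fun i j => v i * star (v j)

/-- Unit vector predicate. -/
def UnitVec {d : Type*} [Fintype d] (v : d → ℂ) : Prop := (∑ i, ‖v i‖ ^ 2) = 1

/-- Choi matrix of a linear map on matrices. -/
def choi {A B : Type*} [Fintype A] [DecidableEq A]
    (Φ : Matrix A A ℂ →ₗ[ℂ] Matrix B B ℂ) : Matrix (A × B) (A × B) ℂ :=
  fun p q => Φ (Matrix.single p.1 q.1 1) p.2 q.2

/-- A quantum channel: completely positive (Choi matrix PSD) and trace preserving. -/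
def IsCPTP {A B : Type*} [Fintype A] [DecidableEq A] [Fintype B]
    (Φ : Matrix A A ℂ →ₗ[ℂ] Matrix B B ℂ) : Prop :=
  (choi Φ).PosSemidef ∧ ∀ M : Matrix A A ℂ, (Φ M).trace = M.trace

/-- The extension Φ ⊗ id_R of a map on matrices by the identity on a second factor. -/
def extendRight {A B : Type*} (Φ : Matrix A A ℂ →ₗ[ℂ] Matrix B B ℂ) (R : Type*) :
    Matrix (A × R) (A × R) ℂ →ₗ[ℂ] Matrix (B × R) (B × R) ℂ where
  toFun M := fun p q => Φ (fun a a' => M (a, p.2) (a', q.2)) p.1 q.1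
  map_add' M N := by
    funext p q
    show Φ (fun a a' => (M + N) (a, p.2) (a', q.2)) p.1 q.1
      = Φ (fun a a' => M (a, p.2) (a', q.2)) p.1 q.1
        + Φ (fun a a' => N (a, p.2) (a', q.2)) p.1 q.1
    have h : (fun a a' => (M + N) (a, p.2) (a', q.2))
        = (fun a a' => M (a, p.2) (a', q.2)) + fun a a' => N (a, p.2) (a', q.2) := rfl
    exact congrFun (congrFun (map_add Φ (fun a a' => M (a, p.2) (a', q.2))
      (fun a a' => N (a, p.2) (a', q.2))) p.1) q.1
  map_smul' c M := by
    funext p q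
    show Φ (fun a a' => (c • M) (a, p.2) (a', q.2)) p.1 q.1
      = c • Φ (fun a a' => M (a, p.2) (a', q.2)) p.1 q.1
    have h : (fun a a' => (c • M) (a, p.2) (a', q.2))
        = c • fun a a' => M (a, p.2) (a', q.2) := rfl
    exact congrFun (congrFun (map_smul Φ c (fun a a' => M (a, p.2) (a', q.2))) p.1) q.1

/-- The n-fold tensor power Φ^{⊗n} of a map on matrices. -/
def powMap {A B : Type*} [Fintype A] [DecidableEq A]
    (Φ : Matrix A A ℂ →ₗ[ℂ] Matrix B B ℂ) (n : ℕ) :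
    Matrix (Fin n → A) (Fin n → A) ℂ →ₗ[ℂ] Matrix (Fin n → B) (Fin n → B) ℂ where
  toFun M := fun b b' => ∑ a : Fin n → A, ∑ a' : Fin n → A,
      (∏ i, Φ (Matrix.single (a i) (a' i) 1) (b i) (b' i)) * M a a'
  map_add' M N := by
    funext b b'
    show _ = (_ : ℂ) + _
    simp [Matrix.add_apply, mul_add, Finset.sum_add_distrib]
  map_smul' c M := by
    funext b b'
    show _ = c * _
    simp only [Matrix.smul_apply, smul_eq_mul, RingHom.id_apply, Finset.mul_sum]
    refine Finset.sum_congr rfl fun a _ => Finset.sum_congr rfl fun a' _ => by ring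

/-- Tensor power ρ^{⊗m} of a bipartite state, arranged as (A'^m) × (R^m). -/
def statePow {A' R : Type*} (ρ : Matrix (A' × R) (A' × R) ℂ) (m : ℕ) :
    Matrix ((Fin m → A') × (Fin m → R)) ((Fin m → A') × (Fin m → R)) ℂ :=
  fun p q => ∏ i, ρ (p.1 i, p.2 i) (q.1 i, q.2 i)

/-- Partial trace over the second factor. -/
def traceOutSnd {A R : Type*} [Fintype R] (M : Matrix (A × R) (A × R) ℂ) : Matrix A A ℂ :=
  fun a a' => ∑ r, M (a, r) (a', r)

/-- Partial trace over the first factor. -/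
def traceOutFst {A R : Type*} [Fintype A] (M : Matrix (A × R) (A × R) ℂ) : Matrix R R ℂ :=
  fun r r' => ∑ a, M (a, r) (a, r')

/-- Marginal on B,X of a state on (B × R) × X. -/
def margBX {B R X : Type*} [Fintype R] (σ : Matrix ((B × R) × X) ((B × R) × X) ℂ) :
    Matrix (B × X) (B × X) ℂ :=
  fun u v => ∑ r, σ ((u.1, r), u.2) ((v.1, r), v.2)

/-- Marginal on B of a state on (B × R) × X. -/
def margB {B R X : Type*} [Fintype R] [Fintype X] (σ : Matrix ((B × R) × X) ((B × R) × X) ℂ) :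
    Matrix B B ℂ :=
  fun b b' => ∑ r, ∑ x, σ ((b, r), x) ((b', r), x)

/-- Marginal on X of a state on (B × R) × X. -/
def margX {B R X : Type*} [Fintype B] [Fintype R] (σ : Matrix ((B × R) × X) ((B × R) × X) ℂ) :
    Matrix X X ℂ :=
  fun x x' => ∑ b, ∑ r, σ ((b, r), x) ((b, r), x')

/-- Mutual information I(B:X) of a state on (B × R) × X. -/
def mutInfoBX {B R X : Type*} [Fintype B] [DecidableEq B] [Fintype R] [Fintype X]
    [DecidableEq X] (σ : Matrix ((B × R) × X) ((B × R) × X) ℂ) : ℝ :=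
  entropy (margB σ) + entropy (margX σ) - entropy (margBX σ)

/-- Coherent information I(R⟩BX) = S(BX) - S(BRX) of a state on (B × R) × X. -/
def cohInfoRBX {B R X : Type*} [Fintype B] [DecidableEq B] [Fintype R] [DecidableEq R]
    [Fintype X] [DecidableEq X] (σ : Matrix ((B × R) × X) ((B × R) × X) ℂ) : ℝ :=
  entropy (margBX σ) - entropy σ

/-- Generalized information I_G = I(B:X) + I(R⟩BX) of a state on (B × R) × X. -/
def genInfo {B R X : Type*} [Fintype B] [DecidableEq B] [Fintype R] [DecidableEq R]
    [Fintype X] [DecidableEq X] (σ : Matrix ((B × R) × X) ((B × R) × X) ℂ) : ℝ :=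
  mutInfoBX σ + cohInfoRBX σ

/-- Output (N ⊗ id_{RX}) ρ^{ARX} of a cq state with pure conditional states. -/
def cqOutput {A B R X : Type*} [DecidableEq X]
    (N : Matrix A A ℂ →ₗ[ℂ] Matrix B B ℂ) (p : X → ℝ) (φ : X → A × R → ℂ) :
    Matrix ((B × R) × X) ((B × R) × X) ℂ :=
  fun u v =>
    if u.2 = v.2 then (p u.2 : ℂ) * extendRight N R (vecState (φ u.2)) u.1 v.1 else 0

/-- A cq ensemble: probability distribution together with unit (pure-state) vectors. -/
def IsCQEnsemble {dX : ℕ} {V : Type*} [Fintype V] (p : Fin dX → ℝ) (φ : Fin dX → V → ℂ) : Prop :=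
  (∀ x, 0 ≤ p x) ∧ ((∑ x, p x) = 1) ∧ ∀ x, UnitVec (φ x)

/-- The quantity C_G(ρ^{A'R}, n, ε, N): the largest m·S(CQ)_ω/n achievable by an
(n,ε) code; `SCQ` stands for the entropy S(CQ)_ω of the KI decomposition of ρ. -/
def CGn {A B A' R : Type*} [Fintype A] [DecidableEq A] [Fintype B] [DecidableEq B]
    [Fintype A'] [DecidableEq A'] [Fintype R] [DecidableEq R]
    (N : Matrix A A ℂ →ₗ[ℂ] Matrix B B ℂ) (ρ : Matrix (A' × R) (A' × R) ℂ)
    (SCQ : ℝ) (n : ℕ) (ε : ℝ) : ℝ :=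
  sSup { x : ℝ | ∃ m : ℕ,
    (∃ (E : Matrix (Fin m → A') (Fin m → A') ℂ →ₗ[ℂ] Matrix (Fin n → A) (Fin n → A) ℂ)
       (D : Matrix (Fin n → B) (Fin n → B) ℂ →ₗ[ℂ] Matrix (Fin m → A') (Fin m → A') ℂ),
       IsCPTP E ∧ IsCPTP D ∧
       1 - ε ≤ fidelity (statePow ρ m)
         (extendRight (D.comp ((powMap N n).comp E)) (Fin m → R) (statePow ρ m))) ∧
    x = (m * SCQ) / n }

/-- The generalized capacity C_G(ρ^{A'R}, N) = inf_{ε>0} liminf_{n→∞} C_G(ρ,n,ε,N). -/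
def CG {A B A' R : Type*} [Fintype A] [DecidableEq A] [Fintype B] [DecidableEq B]
    [Fintype A'] [DecidableEq A'] [Fintype R] [DecidableEq R]
    (N : Matrix A A ℂ →ₗ[ℂ] Matrix B B ℂ) (ρ : Matrix (A' × R) (A' × R) ℂ)
    (SCQ : ℝ) : ℝ :=
  ⨅ ε : {e : ℝ // 0 < e}, Filter.liminf (fun n : ℕ => CGn N ρ SCQ n ε.1) Filter.atTop

/-- max of the generalized information I_G(φ^{A^lRX}, N^{⊗l}) over cq states whose
output satisfies I(B^l:X)/I(R⟩B^lX) = ratio, with |X| ≤ |A|² + 2. -/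
def maxIG {A B : Type*} [Fintype A] [DecidableEq A] [Fintype B] [DecidableEq B]
    (N : Matrix A A ℂ →ₗ[ℂ] Matrix B B ℂ) (l : ℕ) (ratio : ℝ) : ℝ :=
  sSup { y : ℝ | ∃ dR dX : ℕ, dX ≤ Fintype.card A ^ 2 + 2 ∧
    ∃ (p : Fin dX → ℝ) (φ : Fin dX → ((Fin l → A) × Fin dR) → ℂ),
      IsCQEnsemble p φ ∧
      mutInfoBX (cqOutput (powMap N l) p φ) / cohInfoRBX (cqOutput (powMap N l) p φ) = ratio ∧
      y = genInfo (cqOutput (powMap N l) p φ) }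

/-- Marginal on C of a Koashi-Imoto state: the diagonal matrix of probabilities. -/
def kiMargC {C : Type*} [DecidableEq C] (p : C → ℝ) : Matrix C C ℂ :=
  Matrix.diagonal fun c => (p c : ℂ)

/-- Marginal on CQ of a Koashi-Imoto state Σ_c p_c |c⟩⟨c| ⊗ ω_c^{QR}. -/
def kiMargCQ {C Q R : Type*} [DecidableEq C] [Fintype R]
    (p : C → ℝ) (ωc : C → Matrix (Q × R) (Q × R) ℂ) : Matrix (C × Q) (C × Q) ℂ :=
  fun u v => if u.1 = v.1 then (p u.1 : ℂ) * traceOutSnd (ωc u.1) u.2 v.2 else 0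

section YW

variable {C Q R R' : Type*} [Fintype C] [DecidableEq C] [Fintype Q] [DecidableEq Q]
  [Fintype R] [DecidableEq R] [Fintype R'] [DecidableEq R']

/-- The extended KI state ω^{CQRR'C'} = Σ_c p_c |c⟩⟨c|^C ⊗ |ω_c⟩⟨ω_c|^{QRR'} ⊗ |c⟩⟨c|^{C'},
arranged on (C × Q) × (R × R' × C'), with purifying vectors `w c`. -/
def omegaExt (p : C → ℝ) (w : C → Q × R × R' → ℂ) :
    Matrix ((C × Q) × R × R' × C) ((C × Q) × R × R' × C) ℂ :=
  fun u v =>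
    if u.1.1 = u.2.2.2 ∧ v.1.1 = v.2.2.2 ∧ u.1.1 = v.1.1 then
      (p u.1.1 : ℂ) * w u.1.1 (u.1.2, u.2.1, u.2.2.1) * star (w v.1.1 (v.1.2, v.2.1, v.2.2.1))
    else 0

/-- The KI state ω^{CQR}, as the marginal of the extension over R' and C'. -/
def omegaCQR (p : C → ℝ) (w : C → Q × R × R' → ℂ) :
    Matrix ((C × Q) × R) ((C × Q) × R) ℂ :=
  fun a b => ∑ r' : R', ∑ c' : C, omegaExt p w (a.1, a.2, r', c') (b.1, b.2, r', c')

/-- The states ω_c^{QR} recovered from the purifying vectors. -/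
def purifiedOmega (w : C → Q × R × R' → ℂ) (c : C) : Matrix (Q × R) (Q × R) ℂ :=
  fun a b => ∑ r' : R', w c (a.1, a.2, r') * star (w c (b.1, b.2, r'))

/-- Environment system of bounded dimension |E| ≤ (|C||Q|)². -/
def EnvT (C Q : Type*) [Fintype C] [Fintype Q] : Type :=
  Fin ((Fintype.card C * Fintype.card Q) ^ 2)

instance (C Q : Type*) [Fintype C] [Fintype Q] : Fintype (EnvT C Q) := by
  unfold EnvT; infer_instance

instance (C Q : Type*) [Fintype C] [Fintype Q] : DecidableEq (EnvT C Q) := by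
  unfold EnvT; infer_instance

/-- The state τ = (U ⊗ 1_{RR'C'}) ω^{CQRR'C'} (U† ⊗ 1_{RR'C'}). -/
def tauOf (U : Matrix ((C × Q) × EnvT C Q) (C × Q) ℂ)
    (p : C → ℝ) (w : C → Q × R × R' → ℂ) :
    Matrix (((C × Q) × EnvT C Q) × R × R' × C) (((C × Q) × EnvT C Q) × R × R' × C) ℂ :=
  (U ⊗ₖ (1 : Matrix (R × R' × C) (R × R' × C) ℂ)) * omegaExt p w *
    (U ⊗ₖ (1 : Matrix (R × R' × C) (R × R' × C) ℂ))ᴴ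

/-- Marginal of τ on Ĉ Q̂ R. -/
def tauCQRmarg (τ : Matrix (((C × Q) × EnvT C Q) × R × R' × C)
    (((C × Q) × EnvT C Q) × R × R' × C) ℂ) :
    Matrix ((C × Q) × R) ((C × Q) × R) ℂ :=
  fun a b => ∑ e : EnvT C Q, ∑ r' : R', ∑ c' : C,
    τ ((a.1, e), a.2, r', c') ((b.1, e), b.2, r', c')

/-- Conditional entropy S(Q̂ R R' | Ĉ)_τ = S(Ĉ Q̂ R R') − S(Ĉ). -/
def condQRRC (τ : Matrix (((C × Q) × EnvT C Q) × R × R' × C)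
    (((C × Q) × EnvT C Q) × R × R' × C) ℂ) : ℝ :=
  entropy (fun a b : (C × Q) × R × R' => ∑ e : EnvT C Q, ∑ c' : C,
      τ ((a.1, e), a.2.1, a.2.2, c') ((b.1, e), b.2.1, b.2.2, c'))
    - entropy (fun c d : C => ∑ q : Q, ∑ e : EnvT C Q, ∑ r : R, ∑ r' : R', ∑ c' : C,
      τ (((c, q), e), r, r', c') (((d, q), e), r, r', c'))

/-- Conditional entropy S(Ĉ | C')_τ = S(Ĉ C') − S(C'). -/
def condCC (τ : Matrix (((C × Q) × EnvT C Q) × R × R' × C)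
    (((C × Q) × EnvT C Q) × R × R' × C) ℂ) : ℝ :=
  entropy (fun u v : C × C => ∑ q : Q, ∑ e : EnvT C Q, ∑ r : R, ∑ r' : R',
      τ (((u.1, q), e), r, r', u.2) (((v.1, q), e), r, r', v.2))
    - entropy (fun c' d' : C => ∑ c : C, ∑ q : Q, ∑ e : EnvT C Q, ∑ r : R, ∑ r' : R',
      τ (((c, q), e), r, r', c') (((c, q), e), r, r', d'))

/-- Y_ε(ω): max of S(Q̂RR'|Ĉ)_τ over isometries U : CQ → ĈQ̂E achieving fidelity ≥ 1−ε. -/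
def Yfun (p : C → ℝ) (w : C → Q × R × R' → ℂ) (ε : ℝ) : ℝ :=
  sSup { y : ℝ | ∃ U : Matrix ((C × Q) × EnvT C Q) (C × Q) ℂ,
    Uᴴ * U = 1 ∧
    1 - ε ≤ fidelity (omegaCQR p w) (tauCQRmarg (tauOf U p w)) ∧
    y = condQRRC (tauOf U p w) }

/-- W_ε(ω): max of S(Ĉ|C')_τ over isometries U : CQ → ĈQ̂E achieving fidelity ≥ 1−ε. -/
def Wfun (p : C → ℝ) (w : C → Q × R × R' → ℂ) (ε : ℝ) : ℝ :=
  sSup { y : ℝ | ∃ U : Matrix ((C × Q) × EnvT C Q) (C × Q) ℂ,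
    Uᴴ * U = 1 ∧
    1 - ε ≤ fidelity (omegaCQR p w) (tauCQRmarg (tauOf U p w)) ∧
    y = condCC (tauOf U p w) }

end YW

/-- Mutual information of a bipartite state on B × X. -/
def mutInfo2 {B X : Type*} [Fintype B] [DecidableEq B] [Fintype X] [DecidableEq X]
    (M : Matrix (B × X) (B × X) ℂ) : ℝ :=
  entropy (traceOutSnd M) + entropy (traceOutFst M) - entropy M

/-- Coherent information of a channel for a state, via the canonical purification. -/
def cohInfo {Q' B' : Type*} [Fintype Q'] [DecidableEq Q'] [Fintype B'] [DecidableEq B']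
    (ρ : Matrix Q' Q' ℂ) (M : Matrix Q' Q' ℂ →ₗ[ℂ] Matrix B' B' ℂ) : ℝ :=
  if hρ : ρ.PosSemidef then
    entropy (traceOutSnd (extendRight M Q' (vecState fun u : Q' × Q' => hρ.sqrt u.1 u.2)))
      - entropy (extendRight M Q' (vecState fun u : Q' × Q' => hρ.sqrt u.1 u.2))
  else 0

section SqrtCompat

open scoped MatrixOrder

theorem _root_.Matrix.PosSemidef.sqrt_eq_cfcSqrt {n : Type*} [Fintype n] [DecidableEq n]
    {A : Matrix n n ℂ} (hA : A.PosSemidef) : hA.sqrt = CFC.sqrt A := by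
  have h0 : (0 : Matrix n n ℂ) ≤ A := Matrix.nonneg_iff_posSemidef.mpr hA
  rw [CFC.sqrt_eq_cfc, cfc_nnreal_eq_real _ A, hA.1.cfc_eq, Matrix.IsHermitian.cfc,
    Unitary.conjStarAlgAut_apply, Matrix.PosSemidef.sqrt]
  congr 3
  funext i
  simp [Real.coe_toNNReal', max_eq_left (hA.eigenvalues_nonneg i)]

theorem _root_.Matrix.PosSemidef.posSemidef_sqrt {n : Type*} [Fintype n] [DecidableEq n]
    {A : Matrix n n ℂ} (hA : A.PosSemidef) : hA.sqrt.PosSemidef := by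
  rw [hA.sqrt_eq_cfcSqrt]
  exact Matrix.nonneg_iff_posSemidef.mp (CFC.sqrt_nonneg A)

theorem _root_.Matrix.PosSemidef.sqrt_mul_self {n : Type*} [Fintype n] [DecidableEq n]
    {A : Matrix n n ℂ} (hA : A.PosSemidef) : hA.sqrt * hA.sqrt = A := by
  rw [hA.sqrt_eq_cfcSqrt]
  exact CFC.sqrt_mul_sqrt_self A (Matrix.nonneg_iff_posSemidef.mpr hA)

theorem _root_.Matrix.PosSemidef.eq_sqrt_of_sq_eq {n : Type*} [Fintype n] [DecidableEq n]
    {A B : Matrix n n ℂ} (hB : B.PosSemidef) (hA : A.PosSemidef) (h : B ^ 2 = A) :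
    B = hA.sqrt := by
  rw [hA.sqrt_eq_cfcSqrt, eq_comm, CFC.sqrt_eq_iff A B (Matrix.nonneg_iff_posSemidef.mpr hA)
    (Matrix.nonneg_iff_posSemidef.mpr hB), ← sq, h]

theorem _root_.Matrix.PosSemidef.exists_eq_conjTranspose_mul_self {n : Type*} [Fintype n]
    {A : Matrix n n ℂ} (hA : A.PosSemidef) : ∃ C : Matrix n n ℂ, A = Cᴴ * C := by
  obtain ⟨C, hC⟩ := CStarAlgebra.nonneg_iff_eq_star_mul_self.mp
    (Matrix.nonneg_iff_posSemidef.mpr hA)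
  exact ⟨C, by rw [hC, Matrix.star_eq_conjTranspose]⟩

end SqrtCompat

section AuxProof

open Complex

variable {n : Type*} [Fintype n] [DecidableEq n]

private lemma diag_nonneg' {M : Matrix n n ℂ} (hM : M.PosSemidef) (i : n) : 0 ≤ M i i := by
  exact hM.diag_nonneg

private lemma trace_mono_of_sq {S T : Matrix n n ℂ} (hS : S.PosSemidef) (hT : T.PosSemidef)
    (h : (S * S - T * T).PosSemidef) : (Matrix.trace T).re ≤ (Matrix.trace S).re := by
  classical
  set U : Matrix n n ℂ := (hS.1.eigenvectorUnitary : Matrix n n ℂ) with hUdef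
  have hU1 : U * star U = 1 := Matrix.mem_unitaryGroup_iff.mp hS.1.eigenvectorUnitary.2
  have hD : star U * S * U = Matrix.diagonal (RCLike.ofReal ∘ hS.1.eigenvalues) :=
    by simpa using hS.1.conjStarAlgAut_star_eigenvectorUnitary
  set D : Matrix n n ℂ := Matrix.diagonal (RCLike.ofReal ∘ hS.1.eigenvalues) with hDdef
  set T' : Matrix n n ℂ := star U * T * U with hT'def
  have key : ∀ M : Matrix n n ℂ, (star U * M * U) * (star U * M * U) = star U * (M * M) * U := by
    intro M
    simp only [Matrix.mul_assoc]
    rw [← Matrix.mul_assoc U (star U) (M * U), hU1, Matrix.one_mul]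
  have hT' : T'.PosSemidef := by
    have := hT.conjTranspose_mul_mul_same U
    rwa [← Matrix.star_eq_conjTranspose] at this
  have e : star U * (S * S - T * T) * U = D * D - (star U * T * U) * (star U * T * U) := by
    rw [Matrix.mul_sub, Matrix.sub_mul, ← key S, ← key T, hD]
  have h' : (D * D - T' * T').PosSemidef := by
    have := h.conjTranspose_mul_mul_same U
    rw [← Matrix.star_eq_conjTranspose, e] at this
    exact this
  have htrT : Matrix.trace T = Matrix.trace T' := by
    rw [hT'def, Matrix.trace_mul_cycle, hU1, Matrix.one_mul]
  have htrS : Matrix.trace S = Matrix.trace D := by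
    rw [← hD, Matrix.trace_mul_cycle, hU1, Matrix.one_mul]
  rw [htrT, htrS, Matrix.trace, Matrix.trace, Complex.re_sum, Complex.re_sum]
  apply Finset.sum_le_sum
  intro i _
  have hTd := diag_nonneg' hT' i
  obtain ⟨hre, him⟩ := Complex.nonneg_iff.mp hTd
  have hμ : 0 ≤ hS.1.eigenvalues i := hS.eigenvalues_nonneg i
  have hDd : D.diag i = ((hS.1.eigenvalues i : ℝ) : ℂ) := by
    simp [hDdef, Matrix.diag, Matrix.diagonal_apply_eq]
  have hDDd : (D * D) i i = (((hS.1.eigenvalues i)^2 : ℝ) : ℂ) := by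
    rw [hDdef, Matrix.diagonal_mul_diagonal, Matrix.diagonal_apply_eq]
    simp only [Function.comp_apply, RCLike.ofReal_real_eq_id, id_eq]
    push_cast
    ring_nf
    rfl
  have h2 := diag_nonneg' h' i
  rw [Matrix.sub_apply, hDDd] at h2
  obtain ⟨h2re, -⟩ := Complex.nonneg_iff.mp h2
  rw [Complex.sub_re, Complex.ofReal_re] at h2re
  have h3 : ((T' * T') i i).re = ∑ j, Complex.normSq (T' i j) := by
    rw [Matrix.mul_apply, Complex.re_sum]
    refine Finset.sum_congr rfl fun j _ => ?_
    have hsym : T' j i = star (T' i j) := (hT'.1.apply j i).symm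
    rw [hsym, Complex.star_def, Complex.mul_conj]
    simp
  have h4 : Complex.normSq (T' i i) ≤ ∑ j, Complex.normSq (T' i j) :=
    Finset.single_le_sum (fun j _ => Complex.normSq_nonneg _) (Finset.mem_univ i)
  have h5 : Complex.normSq (T' i i) = (T' i i).re ^ 2 := by
    rw [Complex.normSq_apply, ← him]
    ring
  have hDgoal : (D.diag i).re = hS.1.eigenvalues i := by rw [hDd, Complex.ofReal_re]
  rw [hDgoal]
  show (T' i i).re ≤ _
  nlinarith [h2re, h3, h4, h5, hre, hμ]

variable {A B : Type*} [Fintype A] [DecidableEq A] [Fintype B] [DecidableEq B]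

private lemma posSemidef_traceOutSnd {M : Matrix (A × B) (A × B) ℂ} (hM : M.PosSemidef) :
    (traceOutSnd M).PosSemidef := by
  obtain ⟨C, hC⟩ := hM.exists_eq_conjTranspose_mul_self
  set C2 : Matrix ((A × B) × B) A ℂ := Matrix.of (fun p a => C p.1 (a, p.2)) with hC2
  have : traceOutSnd M = C2ᴴ * C2 := by
    funext a a'
    simp only [traceOutSnd, hC, Matrix.mul_apply, Matrix.conjTranspose_apply, hC2,
      Matrix.of_apply, Fintype.sum_prod_type]
    rw [Finset.sum_comm]
    exact Finset.sum_congr rfl fun b _ => Finset.sum_comm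
  rw [this]
  exact Matrix.posSemidef_conjTranspose_mul_self _

private lemma posSemidef_traceOutFst {M : Matrix (A × B) (A × B) ℂ} (hM : M.PosSemidef) :
    (traceOutFst M).PosSemidef := by
  obtain ⟨C, hC⟩ := hM.exists_eq_conjTranspose_mul_self
  set C2 : Matrix ((A × B) × A) B ℂ := Matrix.of (fun p b => C p.1 (p.2, b)) with hC2
  have : traceOutFst M = C2ᴴ * C2 := by
    funext b b'
    simp only [traceOutFst, hC, Matrix.mul_apply, Matrix.conjTranspose_apply, hC2,
      Matrix.of_apply, Fintype.sum_prod_type]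
    rw [Finset.sum_comm]
    exact Finset.sum_congr rfl fun a _ => Finset.sum_comm
  rw [this]
  exact Matrix.posSemidef_conjTranspose_mul_self _

private lemma posSemidef_vecState_kron (v : A → ℂ) {D : Matrix B B ℂ} (hD : D.PosSemidef) :
    (vecState v ⊗ₖ D).PosSemidef := by
  obtain ⟨C, hC⟩ := hD.exists_eq_conjTranspose_mul_self
  set C2 : Matrix B (A × B) ℂ := Matrix.of (fun k p => star (v p.1) * C k p.2) with hC2
  have : vecState v ⊗ₖ D = C2ᴴ * C2 := by
    funext p q
    simp only [Matrix.kroneckerMap_apply, vecState, hC, Matrix.mul_apply,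
      Matrix.conjTranspose_apply, hC2, Matrix.of_apply, star_mul', star_star, Finset.mul_sum]
    exact Finset.sum_congr rfl (fun k _ => by ring)
  rw [this]
  exact Matrix.posSemidef_conjTranspose_mul_self _

private lemma posSemidef_vecState (v : A → ℂ) : (vecState v).PosSemidef := by
  set C2 : Matrix Unit A ℂ := Matrix.of (fun _ a => star (v a)) with hC2
  have : vecState v = C2ᴴ * C2 := by
    funext a a'
    simp [vecState, Matrix.mul_apply, Matrix.conjTranspose_apply, hC2]
  rw [this]
  exact Matrix.posSemidef_conjTranspose_mul_self _

end AuxProof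

section AuxProof2

open Complex

private lemma star_entry {d : Type*} [Fintype d] {R : Matrix d d ℂ} (hRH : Rᴴ = R)
    (i j : d) : star (R j i) = R i j := by
  rw [← Matrix.conjTranspose_apply, hRH]

private lemma fidelity_vecState_eq {d : Type*} [Fintype d] [DecidableEq d]
    (ρ : Matrix d d ℂ) (hρ : ρ.PosSemidef) (ψ : d → ℂ) :
    fidelity ρ (vecState ψ) = Real.sqrt ((star ψ ⬝ᵥ (ρ *ᵥ ψ)).re) := by
  have hRH : hρ.sqrtᴴ = hρ.sqrt := hρ.posSemidef_sqrt.1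
  set R := hρ.sqrt with hRdef
  set v : d → ℂ := R *ᵥ ψ with hvdef
  have hvs : ∀ j, star (v j) = ∑ l, star (ψ l) * R l j := by
    intro j
    rw [hvdef]
    simp only [Matrix.mulVec, dotProduct]
    rw [star_sum]
    exact Finset.sum_congr rfl fun l _ => by
      rw [star_mul', star_entry hRH]
      ring
  have hM : R * vecState ψ * R = vecState v := by
    funext i j
    simp only [Matrix.mul_apply, vecState, Finset.sum_mul, Finset.mul_sum]
    rw [hvs j, hvdef]
    simp only [Matrix.mulVec, dotProduct, Finset.sum_mul, Finset.mul_sum]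
    exact Finset.sum_congr rfl fun k _ => Finset.sum_congr rfl fun l _ => by ring
  have hq : (star ψ ⬝ᵥ (ρ *ᵥ ψ)).re = ∑ i, Complex.normSq (v i) := by
    have h1 : star ψ ⬝ᵥ (ρ *ᵥ ψ) = ∑ i, star (v i) * v i := by
      have hρRR : ρ = R * R := hρ.sqrt_mul_self.symm
      have hsv : star ψ ᵥ* R = star v := by
        rw [hvdef, Matrix.star_mulVec, hRH]
      rw [hρRR, ← Matrix.mulVec_mulVec, dotProduct_mulVec, hsv, ← hvdef]
      simp only [dotProduct, Pi.star_apply]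
    rw [h1, Complex.re_sum]
    refine Finset.sum_congr rfl fun i _ => ?_
    rw [show star (v i) * v i = v i * star (v i) from mul_comm _ _, Complex.star_def,
      Complex.mul_conj]
    simp
  have hPSD : (R * vecState ψ * R).PosSemidef := by
    rw [hM]; exact posSemidef_vecState v
  rw [fidelity, dif_pos hρ, ← hRdef, dif_pos hPSD, hq]
  set t : ℝ := ∑ i, Complex.normSq (v i) with htdef
  have ht0 : 0 ≤ t := Finset.sum_nonneg fun i _ => Complex.normSq_nonneg _
  have htr : Matrix.trace (vecState v) = ((t : ℝ) : ℂ) := by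
    rw [Matrix.trace, htdef]
    push_cast
    refine Finset.sum_congr rfl fun i _ => ?_
    show v i * star (v i) = _
    rw [Complex.star_def, Complex.mul_conj]
  by_cases hvz : v = 0
  · have hv0 : vecState v = (0 : Matrix d d ℂ) := by
      funext i j; simp [vecState, hvz]
    have h0 : (0 : Matrix d d ℂ) = hPSD.sqrt :=
      Matrix.PosSemidef.zero.eq_sqrt_of_sq_eq hPSD (by rw [hM, hv0]; simp)
    rw [← h0]
    simp [htdef, hvz]
  · obtain ⟨i0, hi0⟩ := Function.ne_iff.mp hvz
    have ht : 0 < t := by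
      refine lt_of_lt_of_le (Complex.normSq_pos.mpr hi0) ?_
      exact Finset.single_le_sum (fun i _ => Complex.normSq_nonneg _) (Finset.mem_univ i0)
    set s : ℝ := Real.sqrt t with hsdef
    have hs : 0 < s := Real.sqrt_pos.mpr ht
    have hss : s * s = t := Real.mul_self_sqrt ht0
    set c : ℂ := ((s⁻¹ : ℝ) : ℂ) with hcdef
    set Amat : Matrix d d ℂ := c • vecState v with hAdef
    have hvpsd := posSemidef_vecState v
    have hA : Amat.PosSemidef := by
      refine Matrix.PosSemidef.of_dotProduct_mulVec_nonneg ?_ ?_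
      · show (c • vecState v)ᴴ = c • vecState v
        rw [Matrix.conjTranspose_smul, hvpsd.1, hcdef, Complex.star_def, Complex.conj_ofReal]
      · intro x
        rw [hAdef, Matrix.smul_mulVec, dotProduct_smul, hcdef, smul_eq_mul]
        refine mul_nonneg ?_ (hvpsd.dotProduct_mulVec_nonneg x)
        exact Complex.zero_le_real.mpr (inv_nonneg.mpr hs.le)
    have hMM : vecState v * vecState v = ((t : ℝ) : ℂ) • vecState v := by
      funext i j
      rw [Matrix.mul_apply, Matrix.smul_apply, smul_eq_mul]
      have hterm : ∀ k, vecState v i k * vecState v k j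
          = (Complex.normSq (v k) : ℂ) * (v i * star (v j)) := by
        intro k
        show v i * star (v k) * (v k * star (v j)) = _
        have hnk : v k * star (v k) = (Complex.normSq (v k) : ℂ) := by
          rw [Complex.star_def, Complex.mul_conj]
        rw [← hnk]
        ring
      rw [Finset.sum_congr rfl fun k _ => hterm k, ← Finset.sum_mul]
      congr 1
      rw [htdef]
      push_cast
      rfl
    have hsq : Amat ^ 2 = R * vecState ψ * R := by
      rw [hM, pow_two, hAdef, Matrix.smul_mul, Matrix.mul_smul, hMM, smul_smul, smul_smul]
      have : c * c * ((t : ℝ) : ℂ) = 1 := by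
        rw [hcdef, ← hss]
        push_cast
        field_simp
      rw [this, one_smul]
    have hAeq : Amat = hPSD.sqrt := hA.eq_sqrt_of_sq_eq hPSD hsq
    rw [← hAeq, hAdef, Matrix.trace_smul, htr, hcdef]
    rw [smul_eq_mul, ← Complex.ofReal_mul, Complex.ofReal_re, ← hss]
    field_simp

end AuxProof2

/-- if the reduced state of ξ^{AB} on A is ε-close in fidelity to a pure
state |ψ⟩, then ξ^{AB} is 4ε-close to the product |ψ⟩⟨ψ|^A ⊗ ξ^B. -/
theorem almost_pure_reduced_implies_product
    {A B : Type*} [Fintype A] [DecidableEq A] [Fintype B] [DecidableEq B]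
    (ξ : Matrix (A × B) (A × B) ℂ) (hξ : IsState ξ)
    (ψ : A → ℂ) (hψ : UnitVec ψ) {ε : ℝ} (hε : 0 ≤ ε)
    (hF : 1 - ε ≤ fidelity (traceOutSnd ξ) (vecState ψ)) :
    1 - 4 * ε ≤ fidelity ξ (vecState ψ ⊗ₖ traceOutFst ξ) := by
  classical
  have hξps : ξ.PosSemidef := hξ.1
  -- the pure projector on A tensored with identity on B
  set P : Matrix (A × B) (A × B) ℂ := vecState ψ ⊗ₖ (1 : Matrix B B ℂ) with hPdef
  set xt : Matrix B B ℂ :=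
    Matrix.of (fun b b' => ∑ a₁, ∑ a₂, star (ψ a₁) * ξ (a₁, b) (a₂, b') * ψ a₂) with hxtdef
  have hψ1 : (∑ a, ψ a * star (ψ a)) = (1 : ℂ) := by
    have : ∀ a, ψ a * star (ψ a) = ((‖ψ a‖ ^ 2 : ℝ) : ℂ) := by
      intro a
      simp [Complex.star_def, Complex.mul_conj, Complex.normSq_eq_norm_sq]
    rw [Finset.sum_congr rfl fun a _ => this a, ← Complex.ofReal_sum, hψ]
    norm_num
  -- (i) P ξ P = |ψ⟩⟨ψ| ⊗ xt
  have hPP : P * ξ * P = vecState ψ ⊗ₖ xt := by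
    funext p q
    obtain ⟨a, b⟩ := p
    obtain ⟨a', b'⟩ := q
    simp only [hPdef, hxtdef, Matrix.mul_apply, Matrix.kroneckerMap_apply, vecState,
      Matrix.one_apply, Matrix.of_apply, Fintype.sum_prod_type, mul_ite, ite_mul, mul_zero,
      zero_mul, mul_one, one_mul, Finset.sum_ite_eq, Finset.sum_ite_eq', Finset.mem_univ,
      if_true, Finset.sum_mul, Finset.mul_sum]
    conv_lhs => rw [Finset.sum_comm]
    refine Finset.sum_congr rfl fun a₂ _ => Finset.sum_congr rfl fun a₁ _ => by ring
  -- (ii) the B-marginal defect is PSD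
  set Q : Matrix (A × B) (A × B) ℂ := 1 - P with hQdef
  have hPpsd : P.PosSemidef := by
    rw [hPdef]; exact posSemidef_vecState_kron ψ Matrix.PosSemidef.one
  have hQH : Qᴴ = Q := by
    rw [hQdef, Matrix.conjTranspose_sub, Matrix.conjTranspose_one, hPpsd.1]
  have hQpsd : (Q * ξ * Q).PosSemidef := by
    have := hξps.mul_mul_conjTranspose_same Q
    rwa [hQH] at this
  have hPxi : ∀ b b', (∑ a, (P * ξ) (a, b) (a, b')) = xt b b' := by
    intro b b'
    simp only [hPdef, hxtdef, Matrix.mul_apply, Matrix.kroneckerMap_apply, vecState,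
      Matrix.one_apply, Matrix.of_apply, Fintype.sum_prod_type, mul_ite, ite_mul, mul_zero,
      zero_mul, mul_one, one_mul, Finset.sum_ite_eq, Finset.sum_ite_eq', Finset.mem_univ,
      if_true, Finset.sum_mul, Finset.mul_sum]
    rw [Finset.sum_comm]
    refine Finset.sum_congr rfl fun a₁ _ => Finset.sum_congr rfl fun a₂ _ => by ring
  have hxiP : ∀ b b', (∑ a, (ξ * P) (a, b) (a, b')) = xt b b' := by
    intro b b'
    simp only [hPdef, hxtdef, Matrix.mul_apply, Matrix.kroneckerMap_apply, vecState,
      Matrix.one_apply, Matrix.of_apply, Fintype.sum_prod_type, mul_ite, ite_mul, mul_zero,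
      zero_mul, mul_one, one_mul, Finset.sum_ite_eq, Finset.sum_ite_eq', Finset.mem_univ,
      if_true, Finset.sum_mul, Finset.mul_sum]
    refine Finset.sum_congr rfl fun a₁ _ => Finset.sum_congr rfl fun a₂ _ => by ring
  have hPxiP : ∀ b b', (∑ a, (P * ξ * P) (a, b) (a, b')) = xt b b' := by
    intro b b'
    rw [Finset.sum_congr rfl fun a (_ : a ∈ Finset.univ) => (by rw [hPP] :
      (P * ξ * P) (a, b) (a, b') = (vecState ψ ⊗ₖ xt) (a, b) (a, b'))]
    simp only [Matrix.kroneckerMap_apply, vecState]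
    rw [← Finset.sum_mul, hψ1, one_mul]
  have hTrQ : traceOutFst (Q * ξ * Q) = traceOutFst ξ - xt := by
    have hexp : Q * ξ * Q = ξ - P * ξ - ξ * P + P * ξ * P := by
      rw [hQdef]; noncomm_ring
    funext b b'
    rw [show traceOutFst (Q * ξ * Q) b b' = ∑ a, (Q * ξ * Q) (a, b) (a, b') from rfl]
    simp only [hexp, Matrix.sub_apply, Matrix.add_apply, Finset.sum_sub_distrib,
      Finset.sum_add_distrib]
    rw [hPxi b b', hxiP b b', hPxiP b b']
    rw [show traceOutFst ξ b b' = ∑ a, ξ (a, b) (a, b') from rfl]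
    ring
  have hDpsd : (traceOutFst ξ - xt).PosSemidef := hTrQ ▸ posSemidef_traceOutFst hQpsd
  -- setup of the fidelity goal
  set σ₂ : Matrix (A × B) (A × B) ℂ := vecState ψ ⊗ₖ traceOutFst ξ with hσ₂def
  have hσ₂ : σ₂.PosSemidef := posSemidef_vecState_kron ψ (posSemidef_traceOutFst hξps)
  set R : Matrix (A × B) (A × B) ℂ := hξps.sqrt with hRdef
  have hRH : Rᴴ = R := hξps.posSemidef_sqrt.1
  have hRR : R * R = ξ := hξps.sqrt_mul_self
  have hX : (R * σ₂ * R).PosSemidef := by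
    have := hσ₂.mul_mul_conjTranspose_same R
    rwa [hRH] at this
  set T : Matrix (A × B) (A × B) ℂ := R * P * R with hTdef
  have hT : T.PosSemidef := by
    have := hPpsd.mul_mul_conjTranspose_same R
    rwa [hRH] at this
  have hkronsub : σ₂ - P * ξ * P = vecState ψ ⊗ₖ (traceOutFst ξ - xt) := by
    rw [hσ₂def, hPP]
    funext p q
    simp only [Matrix.sub_apply, Matrix.kroneckerMap_apply]
    ring
  have hdiff : R * σ₂ * R - T * T = R * (vecState ψ ⊗ₖ (traceOutFst ξ - xt)) * R := by
    have hTT : T * T = R * (P * ξ * P) * R := by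
      rw [hTdef]
      calc R * P * R * (R * P * R) = R * P * (R * R) * P * R := by noncomm_ring
        _ = R * (P * ξ * P) * R := by rw [hRR]; noncomm_ring
    rw [hTT, ← hkronsub]
    noncomm_ring
  have hdiffpsd : (R * σ₂ * R - T * T).PosSemidef := by
    rw [hdiff]
    have := (posSemidef_vecState_kron ψ hDpsd).mul_mul_conjTranspose_same R
    rwa [hRH] at this
  -- key inequality
  have hkey : (Matrix.trace T).re ≤ (Matrix.trace hX.sqrt).re := by
    refine trace_mono_of_sq hX.posSemidef_sqrt hT ?_
    rw [hX.sqrt_mul_self]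
    exact hdiffpsd
  -- identify the trace of T
  have htrT : Matrix.trace T = star ψ ⬝ᵥ (traceOutSnd ξ *ᵥ ψ) := by
    have h1 : Matrix.trace T = Matrix.trace (ξ * P) := by
      rw [hTdef, Matrix.trace_mul_cycle, hRR]
    have hmid : Matrix.trace (ξ * P)
        = ∑ a : A, ∑ b : B, ∑ a₂ : A, ξ (a, b) (a₂, b) * (ψ a₂ * star (ψ a)) := by
      rw [Matrix.trace]
      simp only [Matrix.diag, Matrix.mul_apply, hPdef, Matrix.kroneckerMap_apply, vecState,
        Matrix.one_apply, Fintype.sum_prod_type, mul_ite, ite_mul, mul_zero, zero_mul, mul_one,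
        one_mul, Finset.sum_ite_eq, Finset.sum_ite_eq', Finset.mem_univ, if_true]
    have hrhs : star ψ ⬝ᵥ (traceOutSnd ξ *ᵥ ψ)
        = ∑ a : A, ∑ b : B, ∑ a₂ : A, ξ (a, b) (a₂, b) * (ψ a₂ * star (ψ a)) := by
      simp only [dotProduct, Matrix.mulVec, traceOutSnd, Pi.star_apply, Finset.sum_mul,
        Finset.mul_sum]
      refine Finset.sum_congr rfl fun a _ => Finset.sum_comm.trans ?_
      exact Finset.sum_congr rfl fun b _ => Finset.sum_congr rfl fun a₂ _ => by ring
    rw [h1, hmid, hrhs]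
  -- use the hypothesis
  have hρ : (traceOutSnd ξ).PosSemidef := posSemidef_traceOutSnd hξps
  rw [fidelity_vecState_eq _ hρ ψ] at hF
  set p : ℝ := (star ψ ⬝ᵥ (traceOutSnd ξ *ᵥ ψ)).re with hpdef
  have hp0 : 0 ≤ p := hρ.re_dotProduct_nonneg ψ
  have hsq : Real.sqrt p * Real.sqrt p = p := Real.mul_self_sqrt hp0
  have hs0 : 0 ≤ Real.sqrt p := Real.sqrt_nonneg p
  -- unfold the goal fidelity
  rw [fidelity, dif_pos hξps, ← hRdef, dif_pos hX]
  have htp : (Matrix.trace T).re = p := by rw [htrT, hpdef]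
  rw [htp] at hkey
  rcases le_or_gt (1 : ℝ) (4 * ε) with hcase | hcase
  · linarith
  · have h1ε : (0 : ℝ) ≤ 1 - ε := by linarith
    have : (1 - ε) * (1 - ε) ≤ Real.sqrt p * Real.sqrt p :=
      mul_le_mul hF hF h1ε hs0
    nlinarith


end QIT
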